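/- If v and w are tuples of elements of a group G and the product of the entries of v equals the identity (ev(v) = 1), then the concatenations v·w and w·v are braid equivalent, i.e., lie in the same orbit under the Hurwitz action of the braid group. -/

import Mathlib

/-!
Moving an entry `q` leftwards across a tuple `v` by Hurwitz moves turns it into its conjugate
`ev(v) q ev(v)⁻¹`. When `ev(v) = 1` the entries of `w` therefore cross `v` unchanged, one at a
time, carrying `v ++ w` to `w ++ v`.
-/

/-- An elementary Hurwitz move on tuples of elements of `G`:
`(…, a, b, …) ↦ (…, b, b⁻¹ a b, …)`. -/
def HurwitzMove {G : Type*} [Group G] (v w : List G) : Prop :=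
  ∃ (x y : List G) (a b : G), v = x ++ a :: b :: y ∧ w = x ++ b :: (b⁻¹ * a * b) :: y

/-- Braid equivalence: same orbit under the Hurwitz action of the braid group. -/
def BraidEquiv {G : Type*} [Group G] (v w : List G) : Prop :=
  Relation.EqvGen HurwitzMove v w

section

variable {G : Type*} [Group G]

lemma HurwitzMove.append_left {u u' : List G} (x : List G) (h : HurwitzMove u u') :
    HurwitzMove (x ++ u) (x ++ u') := by
  obtain ⟨p, y, a, b, rfl, rfl⟩ := h
  exact ⟨x ++ p, y, a, b, by simp, by simp⟩

lemma HurwitzMove.cons_cons (a c : G) (rest : List G) :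
    HurwitzMove (c :: a :: rest) (a :: (a⁻¹ * c * a) :: rest) :=
  ⟨[], rest, c, a, rfl, rfl⟩

lemma BraidEquiv.refl (v : List G) : BraidEquiv v v :=
  Relation.EqvGen.refl v

lemma BraidEquiv.trans {u v w : List G} (huv : BraidEquiv u v) (hvw : BraidEquiv v w) :
    BraidEquiv u w :=
  Relation.EqvGen.trans u v w huv hvw

lemma BraidEquiv.append_left {u u' : List G} (x : List G) (h : BraidEquiv u u') :
    BraidEquiv (x ++ u) (x ++ u') := by
  induction h with
  | rel a b hab => exact Relation.EqvGen.rel _ _ (hab.append_left x)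
  | refl a => exact BraidEquiv.refl _
  | symm a b _ ih => exact Relation.EqvGen.symm _ _ ih
  | trans a b c _ _ ih₁ ih₂ => exact ih₁.trans ih₂

lemma BraidEquiv.append_cons_conj (v : List G) (q : G) (rest : List G) :
    BraidEquiv (v ++ q :: rest) ((v.prod * q * v.prod⁻¹) :: (v ++ rest)) := by
  induction v with
  | nil => simpa using BraidEquiv.refl (q :: rest)
  | cons a v ih =>
    have move : HurwitzMove
        (((a :: v).prod * q * (a :: v).prod⁻¹) :: a :: (v ++ rest))
        (a :: (v.prod * q * v.prod⁻¹) :: (v ++ rest)) := by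
      simpa [mul_assoc] using
        HurwitzMove.cons_cons a ((a :: v).prod * q * (a :: v).prod⁻¹) (v ++ rest)
    exact (ih.append_left [a]).trans (Relation.EqvGen.symm _ _ (Relation.EqvGen.rel _ _ move))

end

theorem append_braid_comm_of_eval_one {G : Type*} [Group G] (v w : List G)
    (hv : v.prod = 1) : BraidEquiv (v ++ w) (w ++ v) := by
  induction w with
  | nil => simpa using BraidEquiv.refl v
  | cons q w ih =>
    have slide : BraidEquiv (v ++ q :: w) (q :: (v ++ w)) := by
      simpa [hv] using BraidEquiv.append_cons_conj v q w
    exact slide.trans (ih.append_left [q])
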